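/- Every tree-like n-model M of finite depth (i.e., there is a finite upper bound on the length of R-chains of distinct points of M) has a finite tree-like color-preserving submodel N with the same root. -/

import Mathlib

/-! ## Formulas of intuitionistic propositional logic -/

inductive Formula : Type
  | bot : Formula
  | var : ℕ → Formula
  | and : Formula → Formula → Formula
  | or  : Formula → Formula → Formula
  | imp : Formula → Formula → Formula
  deriving DecidableEq

namespace Formula

def top : Formula := imp bot bot

def iff_ (φ ψ : Formula) : Formula := and (imp φ ψ) (imp ψ φ)

/-- `φ` contains no implication at all. -/
def noImp : Formula → Prop
  | bot => True
  | var _ => True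
  | and φ ψ => noImp φ ∧ noImp ψ
  | or φ ψ => noImp φ ∧ noImp ψ
  | imp _ _ => False

/-- NNIL-formulas: no nesting of implications to the left. -/
def IsNNIL : Formula → Prop
  | bot => True
  | var _ => True
  | and φ ψ => IsNNIL φ ∧ IsNNIL ψ
  | or φ ψ => IsNNIL φ ∧ IsNNIL ψ
  | imp φ ψ => noImp φ ∧ IsNNIL ψ

/-- `φ` is an `n`-formula: all its propositional variables are among `p_0, …, p_{n-1}`. -/
def varsBelow (n : ℕ) : Formula → Prop
  | bot => True
  | var p => p < n
  | and φ ψ => varsBelow n φ ∧ varsBelow n ψ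
  | or φ ψ => varsBelow n φ ∧ varsBelow n ψ
  | imp φ ψ => varsBelow n φ ∧ varsBelow n ψ

/-- the propositional variable `p` occurs in the formula -/
def occurs (p : ℕ) : Formula → Prop
  | bot => False
  | var q => q = p
  | and φ ψ => occurs p φ ∨ occurs p ψ
  | or φ ψ => occurs p φ ∨ occurs p ψ
  | imp φ ψ => occurs p φ ∨ occurs p ψ

/-- uniform substitution -/
def subst (σ : ℕ → Formula) : Formula → Formula
  | bot => bot
  | var p => σ p
  | and φ ψ => and (subst σ φ) (subst σ ψ)
  | or φ ψ => or (subst σ φ) (subst σ ψ)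
  | imp φ ψ => imp (subst σ φ) (subst σ ψ)

end Formula

/-- finite conjunction (empty conjunction is ⊤) -/
def listAnd : List Formula → Formula
  | [] => Formula.top
  | φ :: l => Formula.and φ (listAnd l)

/-- finite disjunction (empty disjunction is ⊥) -/
def listOr : List Formula → Formula
  | [] => Formula.bot
  | φ :: l => Formula.or φ (listOr l)

/-! ## Kripke structures, models and satisfaction -/

/-- raw Kripke structure: worlds, relation, Boolean valuation -/
structure KStruct where
  W : Type
  R : W → W → Prop
  V : W → ℕ → Bool

namespace KStruct

/-- a Kripke model: `R` is a partial order and `V` is persistent -/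
def IsModel (M : KStruct) : Prop :=
  (∀ w, M.R w w) ∧
  (∀ w u v, M.R w u → M.R u v → M.R w v) ∧
  (∀ w u, M.R w u → M.R u w → w = u) ∧
  (∀ w u p, M.R w u → M.V w p = true → M.V u p = true)

/-- an `n`-model: a Kripke model whose valuation is restricted to the variables `p_0,…,p_{n-1}` -/
def IsNModel (M : KStruct) (n : ℕ) : Prop :=
  M.IsModel ∧ ∀ w p, n ≤ p → M.V w p = false

/-- intuitionistic satisfaction -/
def sat (M : KStruct) : M.W → Formula → Prop
  | _, Formula.bot => False
  | w, Formula.var p => M.V w p = true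
  | w, Formula.and φ ψ => M.sat w φ ∧ M.sat w ψ
  | w, Formula.or φ ψ => M.sat w φ ∨ M.sat w ψ
  | w, Formula.imp φ ψ => ∀ u, M.R w u → M.sat u φ → M.sat u ψ

/-- the submodel on a subset of the worlds -/
def restrict (M : KStruct) (S : Set M.W) : KStruct where
  W := S
  R := fun a b => M.R a.1 b.1
  V := fun a p => M.V a.1 p

end KStruct

/-- monotonic map between Kripke structures: preserves the order and the colors -/
def Monotonic (M N : KStruct) (f : M.W → N.W) : Prop :=
  (∀ w u, M.R w u → N.R (f w) (f u)) ∧ (∀ w p, N.V (f w) p = M.V w p)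

/-- p-morphism: a monotonic map satisfying the forth condition -/
def PMorphism (M N : KStruct) (f : M.W → N.W) : Prop :=
  Monotonic M N f ∧ ∀ w u', N.R (f w) u' → ∃ u, M.R w u ∧ f u = u'

/-- MR: the class of formulas reflected by monotonic maps between Kripke models -/
def MR (φ : Formula) : Prop :=
  ∀ (N M : KStruct), N.IsModel → M.IsModel →
    ∀ f : N.W → M.W, Monotonic N M f → ∀ w : N.W, M.sat (f w) φ → N.sat w φ

/-- `r` is a root of `M` -/
def IsRoot (M : KStruct) (r : M.W) : Prop := ∀ w, M.R r w

/-- `M` is tree-like with root `r`: rooted, and each point has a finite,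
linearly ordered set of predecessors -/
def IsTree (M : KStruct) (r : M.W) : Prop :=
  IsRoot M r ∧ (∀ w : M.W, {u | M.R u w}.Finite) ∧
  (∀ w u v : M.W, M.R u w → M.R v w → (M.R u v ∨ M.R v u))

/-- `u` is an immediate (proper) successor of `w` -/
def ImmSucc (M : KStruct) (w u : M.W) : Prop :=
  M.R w u ∧ w ≠ u ∧ ∀ v, M.R w v → M.R v u → v = w ∨ v = u

/-- `S` carries a color-preserving submodel of `M` -/
def ColorPresSub (M : KStruct) (S : Set M.W) : Prop :=
  ∀ w ∈ S, ∀ u, M.R w u → ∃ v ∈ S, M.R w v ∧ ∀ p, M.V v p = M.V u p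

/-! ## The β-formulas of finite models -/

/-- the variables among `p_0,…,p_{n-1}` true at `w` -/
def propList (M : KStruct) (n : ℕ) (w : M.W) : List Formula :=
  ((List.range n).filter (fun p => M.V w p)).map Formula.var

/-- the variables among `p_0,…,p_{n-1}` false at `w` -/
def notpropList (M : KStruct) (n : ℕ) (w : M.W) : List Formula :=
  ((List.range n).filter (fun p => !(M.V w p))).map Formula.var

open Classical in
/-- the immediate successors of `w`, as a list -/
noncomputable def immSuccList (M : KStruct) [Fintype M.W] (w : M.W) : List M.W :=
  (Finset.univ.filter (fun u => ImmSucc M w u)).toList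

/-- β(w), defined by recursion on the depth of `w` (computed with enough fuel):
`β(w) = ⋀prop(w) → (⋁notprop(w) ∨ β(w_1) ∨ … ∨ β(w_k))` where the `w_i` are the
immediate successors of `w` (for maximal `w` the last disjunct is the empty disjunction). -/
noncomputable def betaFuel (M : KStruct) [Fintype M.W] (n : ℕ) : ℕ → M.W → Formula
  | 0, _ => Formula.bot
  | (k+1), w =>
      Formula.imp (listAnd (propList M n w))
        (listOr (notpropList M n w ++ (immSuccList M w).map (fun u => betaFuel M n k u)))

/-- β(w) for a point `w` of a finite `n`-model: `Fintype.card M.W` is an upper bound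
for the depth of any point, so the recursion above never runs out of fuel. -/
noncomputable def beta (M : KStruct) [inst : Fintype M.W] (n : ℕ) (w : M.W) : Formula :=
  betaFuel M n (Fintype.card M.W) w

/-! ## Unravelings -/

/-- the unraveling `T_N` of a rooted model `(N, r)`: points are the finite sequences
`⟨r, w_1, …, w_k⟩` in which each entry is an immediate successor of the preceding one,
ordered by the initial-segment relation; such a sequence satisfies the same variables
as its last entry. -/
def Unravel (M : KStruct) (r : M.W) : KStruct where
  W := {l : List M.W // l.head? = some r ∧ List.Chain' (ImmSucc M) l}
  R := fun σ τ => σ.1 <+: τ.1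
  V := fun σ p => (σ.1.getLast?.map (fun w => M.V w p)).getD false

/-! ## Kripke frames -/

structure KFrame where
  W : Type
  R : W → W → Prop

namespace KFrame

/-- a Kripke frame: `R` is a partial order -/
def IsFrame (F : KFrame) : Prop :=
  (∀ w, F.R w w) ∧ (∀ w u v, F.R w u → F.R u v → F.R w v) ∧
  (∀ w u, F.R w u → F.R u w → w = u)

def Persistent (F : KFrame) (V : F.W → ℕ → Bool) : Prop :=
  ∀ w u p, F.R w u → V w p = true → V u p = true

/-- the model on `F` given by a valuation -/
def model (F : KFrame) (V : F.W → ℕ → Bool) : KStruct := ⟨F.W, F.R, V⟩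

/-- `F ⊨ φ` : `φ` is true at every point of every model on `F` -/
def valid (F : KFrame) (φ : Formula) : Prop :=
  ∀ V, F.Persistent V → ∀ w, (F.model V).sat w φ

/-- the substructure of `F` on a subset `S` of its domain, with the restricted order -/
def restrictF (F : KFrame) (S : Set F.W) : KFrame :=
  ⟨S, fun a b => F.R a.1 b.1⟩

end KFrame

/-- a monotonic map from a model `N` into a frame `F` which is color-consistent:
`f(w) R f(u)` implies `col(w) ≤ col(u)` -/
def ColorConsistentMap (N : KStruct) (F : KFrame) (f : N.W → F.W) : Prop :=
  (∀ w u, N.R w u → F.R (f w) (f u)) ∧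
  (∀ w u, F.R (f w) (f u) → ∀ p, N.V w p = true → N.V u p = true)

/-!
There are only finitely many colors, so above each point it suffices to keep one witness for
every color occurring strictly above it, and to repeat the selection from the chosen witnesses.
Finite depth stops this recursion after finitely many levels, so the selected set is finite;
and any submodel of a tree that contains the root is again a tree.
-/

def DepthLE {α : Type*} (R : α → α → Prop) (k : ℕ) (w : α) : Prop :=
  ∀ l : List α, (w :: l).IsChain (fun a b => R a b ∧ a ≠ b) → l.length ≤ k

namespace DepthLE

variable {α : Type*} {R : α → α → Prop} {k : ℕ} {w u : α}

theorem eq_of_rel (h : DepthLE R 0 w) (hwu : R w u) : u = w := by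
  by_contra hne
  simpa using h [u] (List.isChain_pair.2 ⟨hwu, Ne.symm hne⟩)

theorem of_rel (h : DepthLE R (k + 1) w) (hwu : R w u) (hne : w ≠ u) : DepthLE R k u :=
  fun l hl => Nat.le_of_succ_le_succ <| h (u :: l) (List.isChain_cons_cons.2 ⟨⟨hwu, hne⟩, hl⟩)

end DepthLE

section ColorWitnesses

variable {α β : Type*} (R : α → α → Prop) (col : α → β)

noncomputable def colorWitnesses : ℕ → α → Set α
  | 0, w => {w}
  | k + 1, w => insert w
      (⋃ c : β, ⋃ h : ∃ u, R w u ∧ w ≠ u ∧ col u = c, colorWitnesses k h.choose)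

variable {R col}

theorem mem_colorWitnesses_self (k : ℕ) (w : α) : w ∈ colorWitnesses R col k w := by
  cases k <;> simp [colorWitnesses]

theorem colorWitnesses_finite [Finite β] (k : ℕ) (w : α) :
    (colorWitnesses R col k w).Finite := by
  induction k generalizing w with
  | zero => exact Set.finite_singleton w
  | succ k ih => exact (Set.finite_iUnion fun _ => Set.finite_iUnion fun _ => ih _).insert w

theorem exists_mem_colorWitnesses_col_eq {k : ℕ} {w : α} (hw : DepthLE R k w) {v : α}
    (hv : v ∈ colorWitnesses R col k w) {u : α} (hvu : R v u) :
    ∃ x ∈ colorWitnesses R col k w, R v x ∧ col x = col u := by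
  induction k generalizing w with
  | zero =>
    obtain rfl : v = w := hv
    obtain rfl := hw.eq_of_rel hvu
    exact ⟨u, mem_colorWitnesses_self 0 u, hvu, rfl⟩
  | succ k ih =>
    simp only [colorWitnesses, Set.mem_insert_iff, Set.mem_iUnion] at hv ⊢
    rcases hv with rfl | ⟨c, hc, hv⟩
    · by_cases hvu_eq : v = u
      · subst hvu_eq
        exact ⟨v, Or.inl rfl, hvu, rfl⟩
      have hwit : ∃ x, R v x ∧ v ≠ x ∧ col x = col u := ⟨u, hvu, hvu_eq, rfl⟩
      exact ⟨hwit.choose, Or.inr ⟨_, hwit, mem_colorWitnesses_self k _⟩, hwit.choose_spec.1,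
        hwit.choose_spec.2.2⟩
    · obtain ⟨x, hx, hvx, hxu⟩ :=
        ih (hw.of_rel hc.choose_spec.1 hc.choose_spec.2.1) hv
      exact ⟨x, Or.inr ⟨c, hc, hx⟩, hvx, hxu⟩

end ColorWitnesses

theorem KStruct.IsNModel.V_eq_of_forall_fin {M : KStruct} {n : ℕ} (hM : M.IsNModel n)
    {w u : M.W} (h : ∀ p : Fin n, M.V w p = M.V u p) (p : ℕ) : M.V w p = M.V u p := by
  by_cases hp : p < n
  · exact h ⟨p, hp⟩
  · rw [hM.2 w p (not_lt.1 hp), hM.2 u p (not_lt.1 hp)]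

theorem IsTree.restrict {M : KStruct} {r : M.W} (h : IsTree M r) {S : Set M.W} (hr : r ∈ S) :
    IsTree (M.restrict S) ⟨r, hr⟩ :=
  ⟨fun w => h.1 w.1, fun w => (h.2.1 w.1).preimage Subtype.val_injective.injOn,
    fun w u v => h.2.2 w.1 u.1 v.1⟩

/-- every tree-like n-model of finite depth has a finite tree-like
color-preserving submodel with the same root. -/
theorem finite_depth_tree_has_finite_color_preserving_submodel (n : ℕ) (M : KStruct)
    (hM : M.IsNModel n) (r : M.W) (htree : IsTree M r)
    (hdepth : ∃ k : ℕ, ∀ l : List M.W,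
      List.Chain' (fun a b => M.R a b ∧ a ≠ b) l → l.length ≤ k) :
    ∃ S : Set M.W, S.Finite ∧ ∃ hr : r ∈ S,
      IsTree (M.restrict S) ⟨r, hr⟩ ∧ ColorPresSub M S := by
  obtain ⟨k, hk⟩ := hdepth
  have hr_depth : DepthLE M.R k r := fun l hl => (Nat.le_succ _).trans (hk _ hl)
  let col : M.W → Fin n → Bool := fun w p => M.V w p
  refine ⟨colorWitnesses M.R col k r, colorWitnesses_finite k r,
    mem_colorWitnesses_self k r, htree.restrict _, fun w hw u hwu => ?_⟩
  obtain ⟨x, hx, hwx, hxu⟩ := exists_mem_colorWitnesses_col_eq hr_depth hw hwu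
  exact ⟨x, hx, hwx, hM.V_eq_of_forall_fin (congrFun hxu)⟩
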